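/- (Esposito) For the channel Y = Z + N, the gradient of the logarithm of the likelihood ratio l(y) = p_Y(y)/p_N(y) gives the conditional mean estimate: ∇ log l(y) = E[Z | Y = y] for every y ∈ ℝ^L. -/

import Mathlib

/-!
The output density `p_Y(y) = E[p_N(y - Z)]` is a Gaussian mixture. Since `p_N` and
`‖∇p_N(u)‖ = ‖u‖ p_N(u)` are bounded, `p_Y` may be differentiated under the expectation, giving
`∇p_Y(y) = E[p_N(y - Z) (Z - y)] = p_Y(y) (E[Z | Y = y] - y)`. Hence
`∇ log p_Y(y) = E[Z | Y = y] - y`, and subtracting `∇ log p_N(y) = -y` leaves `E[Z | Y = y]`.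
-/

open MeasureTheory ProbabilityTheory Real Filter
open scoped ENNReal NNReal Topology

noncomputable section

/-- Density `p_N(y) = (2π)^{-L/2} exp(-‖y‖²/2)` of the `L`-dimensional standard Gaussian. -/
def stdGaussianDensity {L : ℕ} (y : EuclideanSpace ℝ (Fin L)) : ℝ :=
  (2 * π) ^ (-(L : ℝ) / 2) * Real.exp (-‖y‖ ^ 2 / 2)

/-- Density `p_Y(y) = E[p_N(y − Z)]` of the output `Y = Z + N` of the standard Gaussian
channel with input `Z`. -/
def outDensity {Ω : Type*} [MeasurableSpace Ω] {L : ℕ} (μ : Measure Ω)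
    (Z : Ω → EuclideanSpace ℝ (Fin L)) (y : EuclideanSpace ℝ (Fin L)) : ℝ :=
  ∫ ω, stdGaussianDensity (y - Z ω) ∂μ

/-- Likelihood ratio `l(y) = p_Y(y) / p_N(y)`. -/
def likRatio {Ω : Type*} [MeasurableSpace Ω] {L : ℕ} (μ : Measure Ω)
    (Z : Ω → EuclideanSpace ℝ (Fin L)) (y : EuclideanSpace ℝ (Fin L)) : ℝ :=
  outDensity μ Z y / stdGaussianDensity y

/-- Conditional mean `E[Z | Y = y] = E[Z · p_N(y − Z)] / p_Y(y)` of the input `Z` given the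
output value `Y = y` (Bayes formula). -/
def condMeanBayes {Ω : Type*} [MeasurableSpace Ω] {L : ℕ} (μ : Measure Ω)
    (Z : Ω → EuclideanSpace ℝ (Fin L)) (y : EuclideanSpace ℝ (Fin L)) :
    EuclideanSpace ℝ (Fin L) :=
  WithLp.toLp 2 (fun l => (∫ ω, Z ω l * stdGaussianDensity (y - Z ω) ∂μ) / outDensity μ Z y)

section Gradient

variable {F : Type*} [NormedAddCommGroup F] [InnerProductSpace ℝ F] [CompleteSpace F]
  {f g : F → ℝ} {f' g' x : F}

theorem HasGradientAt.sub (hf : HasGradientAt f f' x) (hg : HasGradientAt g g' x) :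
    HasGradientAt (fun y => f y - g y) (f' - g') x := by
  rw [hasGradientAt_iff_hasFDerivAt, map_sub]
  exact hf.hasFDerivAt.sub hg.hasFDerivAt

theorem HasGradientAt.log (hf : HasGradientAt f f' x) (hx : f x ≠ 0) :
    HasGradientAt (fun y => Real.log (f y)) ((f x)⁻¹ • f') x := by
  rw [hasGradientAt_iff_hasFDerivAt, map_smul]
  exact hf.hasFDerivAt.log hx

theorem HasGradientAt.comp_sub_const (z : F) (hf : HasGradientAt f f' (x - z)) :
    HasGradientAt (fun y => f (y - z)) f' x := by
  rw [hasGradientAt_iff_hasFDerivAt] at hf ⊢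
  have h := hf.comp x ((hasFDerivAt_id x).sub_const z)
  rwa [ContinuousLinearMap.comp_id] at h

end Gradient

section StdGaussianDensity

variable {L : ℕ}

theorem stdGaussianDensity_pos (y : EuclideanSpace ℝ (Fin L)) : 0 < stdGaussianDensity y := by
  unfold stdGaussianDensity; positivity

theorem continuous_stdGaussianDensity : Continuous (stdGaussianDensity (L := L)) := by
  unfold stdGaussianDensity; fun_prop

theorem stdGaussianDensity_le (y : EuclideanSpace ℝ (Fin L)) :
    stdGaussianDensity y ≤ (2 * π) ^ (-(L : ℝ) / 2) := by
  unfold stdGaussianDensity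
  refine mul_le_of_le_one_right (by positivity) (exp_le_one_iff.2 ?_)
  have := sq_nonneg ‖y‖
  linarith

theorem norm_mul_stdGaussianDensity_le (y : EuclideanSpace ℝ (Fin L)) :
    ‖y‖ * stdGaussianDensity y ≤ (2 * π) ^ (-(L : ℝ) / 2) := by
  unfold stdGaussianDensity
  have hexp : ‖y‖ * exp (-‖y‖ ^ 2 / 2) ≤ 1 := by
    rw [← le_div_iff₀ (exp_pos _), one_div, ← exp_neg, neg_div, neg_neg]
    nlinarith [add_one_le_exp (‖y‖ ^ 2 / 2), sq_nonneg (‖y‖ - 1)]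
  calc ‖y‖ * ((2 * π) ^ (-(L : ℝ) / 2) * exp (-‖y‖ ^ 2 / 2))
      = (2 * π) ^ (-(L : ℝ) / 2) * (‖y‖ * exp (-‖y‖ ^ 2 / 2)) := by ring
    _ ≤ (2 * π) ^ (-(L : ℝ) / 2) := mul_le_of_le_one_right (by positivity) hexp

theorem hasGradientAt_stdGaussianDensity (y : EuclideanSpace ℝ (Fin L)) :
    HasGradientAt stdGaussianDensity (-stdGaussianDensity y • y) y := by
  have h := (((hasStrictFDerivAt_norm_sq y).hasFDerivAt.const_mul (-1 / 2)).exp).const_mul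
    ((2 * π) ^ (-(L : ℝ) / 2))
  have hfun : (fun x => (2 * π) ^ (-(L : ℝ) / 2) * exp (-1 / 2 * ‖x‖ ^ 2)) =
      stdGaussianDensity (L := L) := by
    funext x
    rw [stdGaussianDensity]
    ring_nf
  rw [hasGradientAt_iff_hasFDerivAt, ← hfun]
  refine h.congr_fderiv ?_
  ext v
  simp
  ring

theorem hasGradientAt_log_stdGaussianDensity (y : EuclideanSpace ℝ (Fin L)) :
    HasGradientAt (fun y => Real.log (stdGaussianDensity y)) (-y) y := by
  convert (hasGradientAt_stdGaussianDensity y).log (stdGaussianDensity_pos y).ne' using 1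
  rw [smul_smul, mul_neg, inv_mul_cancel₀ (stdGaussianDensity_pos y).ne', neg_one_smul]

end StdGaussianDensity

section Channel

variable {Ω : Type*} [MeasurableSpace Ω] {L : ℕ} {μ : Measure Ω}
  {Z : Ω → EuclideanSpace ℝ (Fin L)}

theorem integrable_comp_const_sub_of_bounded {E G : Type*} [NormedAddCommGroup E]
    [NormedAddCommGroup G] [IsFiniteMeasure μ] {X : Ω → E} (hX : AEStronglyMeasurable X μ)
    {g : E → G} (hg : Continuous g) {C : ℝ} (hgC : ∀ u, ‖g u‖ ≤ C) (x : E) :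
    Integrable (fun ω => g (x - X ω)) μ :=
  .of_bound (hg.comp_aestronglyMeasurable (aestronglyMeasurable_const.sub hX)) C
    (.of_forall fun _ => hgC _)

theorem condMeanBayes_eq_inv_smul_integral (y : EuclideanSpace ℝ (Fin L))
    (h : Integrable (fun ω => stdGaussianDensity (y - Z ω) • Z ω) μ) :
    condMeanBayes μ Z y = (outDensity μ Z y)⁻¹ • ∫ ω, stdGaussianDensity (y - Z ω) • Z ω ∂μ := by
  ext l
  have hl := (EuclideanSpace.proj (𝕜 := ℝ) l).integral_comp_comm h
  simp only [EuclideanSpace.coe_proj] at hl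
  simp [condMeanBayes, ← hl, mul_comm, div_eq_inv_mul]

variable [IsFiniteMeasure μ] (hZ : AEStronglyMeasurable Z μ)
include hZ

theorem integrable_stdGaussianDensity_sub (x : EuclideanSpace ℝ (Fin L)) :
    Integrable (fun ω => stdGaussianDensity (x - Z ω)) μ :=
  integrable_comp_const_sub_of_bounded hZ continuous_stdGaussianDensity
    (fun u => by
      rw [norm_of_nonneg (stdGaussianDensity_pos u).le]
      exact stdGaussianDensity_le u) x

theorem integrable_neg_stdGaussianDensity_sub_smul (x : EuclideanSpace ℝ (Fin L)) :
    Integrable (fun ω => -stdGaussianDensity (x - Z ω) • (x - Z ω)) μ :=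
  integrable_comp_const_sub_of_bounded hZ (g := fun u => -stdGaussianDensity u • u)
    (continuous_stdGaussianDensity.neg.smul continuous_id)
    (fun u => by
      rw [norm_smul, norm_neg, norm_of_nonneg (stdGaussianDensity_pos u).le, mul_comm]
      exact norm_mul_stdGaussianDensity_le u) x

theorem hasGradientAt_outDensity (y : EuclideanSpace ℝ (Fin L)) :
    HasGradientAt (outDensity μ Z) (∫ ω, -stdGaussianDensity (y - Z ω) • (y - Z ω) ∂μ) y := by
  have hgrad := integrable_neg_stdGaussianDensity_sub_smul hZ y
  have h := hasFDerivAt_integral_of_dominated_of_fderiv_le (μ := μ)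
    (F := fun x ω => stdGaussianDensity (x - Z ω))
    (F' := fun x ω => innerSL ℝ (-stdGaussianDensity (x - Z ω) • (x - Z ω)))
    (bound := fun _ => (2 * π) ^ (-(L : ℝ) / 2)) univ_mem
    (.of_forall fun x => (integrable_stdGaussianDensity_sub hZ x).aestronglyMeasurable)
    (integrable_stdGaussianDensity_sub hZ y)
    ((innerSL ℝ).continuous.comp_aestronglyMeasurable hgrad.aestronglyMeasurable)
    (.of_forall fun _ x _ => by
      rw [innerSL_apply_norm, norm_smul, norm_neg, norm_of_nonneg (stdGaussianDensity_pos _).le,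
        mul_comm]
      exact norm_mul_stdGaussianDensity_le _)
    (integrable_const _)
    (.of_forall fun ω x _ =>
      ((hasGradientAt_stdGaussianDensity (x - Z ω)).comp_sub_const (Z ω)).hasFDerivAt)
  rw [(innerSL ℝ).integral_comp_comm hgrad] at h
  exact hasGradientAt_iff_hasFDerivAt.2 h

theorem integrable_stdGaussianDensity_sub_smul (y : EuclideanSpace ℝ (Fin L)) :
    Integrable (fun ω => stdGaussianDensity (y - Z ω) • Z ω) μ := by
  refine (((integrable_stdGaussianDensity_sub hZ y).smul_const y).add
    (integrable_neg_stdGaussianDensity_sub_smul hZ y)).congr (.of_forall fun ω => ?_)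
  rw [Pi.add_apply, neg_smul, smul_sub, neg_sub, add_sub_cancel]

theorem integral_neg_stdGaussianDensity_sub_smul (y : EuclideanSpace ℝ (Fin L)) :
    ∫ ω, -stdGaussianDensity (y - Z ω) • (y - Z ω) ∂μ =
      ∫ ω, stdGaussianDensity (y - Z ω) • Z ω ∂μ - outDensity μ Z y • y := by
  rw [outDensity, ← integral_smul_const,
    ← integral_sub (integrable_stdGaussianDensity_sub_smul hZ y)
      ((integrable_stdGaussianDensity_sub hZ y).smul_const y)]
  congr 1 with ω
  rw [neg_smul, smul_sub, neg_sub]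

theorem outDensity_pos [NeZero μ] (y : EuclideanSpace ℝ (Fin L)) : 0 < outDensity μ Z y := by
  rw [outDensity, integral_pos_iff_support_of_nonneg (fun ω => (stdGaussianDensity_pos _).le)
    (integrable_stdGaussianDensity_sub hZ y)]
  simp [Function.support, (stdGaussianDensity_pos _).ne', NeZero.ne μ]

theorem hasGradientAt_log_outDensity [NeZero μ] (y : EuclideanSpace ℝ (Fin L)) :
    HasGradientAt (fun x => Real.log (outDensity μ Z x)) (condMeanBayes μ Z y - y) y := by
  have hpos := outDensity_pos hZ y
  convert (hasGradientAt_outDensity hZ y).log hpos.ne' using 1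
  rw [integral_neg_stdGaussianDensity_sub_smul hZ, smul_sub, smul_smul, inv_mul_cancel₀ hpos.ne',
    one_smul, condMeanBayes_eq_inv_smul_integral y (integrable_stdGaussianDensity_sub_smul hZ y)]

end Channel

theorem hasGradientAt_log_likRatio_general
    {Ω : Type*} [MeasurableSpace Ω] (μ : Measure Ω) [IsProbabilityMeasure μ]
    {L : ℕ} (Z : Ω → EuclideanSpace ℝ (Fin L)) (hZ : Measurable Z) :
    ∀ y : EuclideanSpace ℝ (Fin L),
      HasGradientAt (fun y' => Real.log (likRatio μ Z y')) (condMeanBayes μ Z y) y := by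
  intro y
  have hZ' := hZ.aestronglyMeasurable (μ := μ)
  have hlog : (fun y' => Real.log (likRatio μ Z y')) =
      fun y' => Real.log (outDensity μ Z y') - Real.log (stdGaussianDensity y') :=
    funext fun y' => log_div (outDensity_pos hZ' y').ne' (stdGaussianDensity_pos y').ne'
  rw [hlog]
  simpa using (hasGradientAt_log_outDensity hZ' y).sub (hasGradientAt_log_stdGaussianDensity y)

/-- **Esposito's lemma** (Lemma 2): for the channel `Y = Z + N`, the gradient of the
log-likelihood ratio gives the conditional mean estimate: `∇ log l(y) = E[Z | Y = y]`. -/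
theorem hasGradientAt_log_likRatio
    {Ω : Type*} [MeasurableSpace Ω] (μ : Measure Ω) [IsProbabilityMeasure μ]
    {L : ℕ} (Z : Ω → EuclideanSpace ℝ (Fin L)) (hZ : Measurable Z)
    (hZ2 : Integrable (fun ω => ‖Z ω‖ ^ 2) μ) :
    ∀ y : EuclideanSpace ℝ (Fin L),
      HasGradientAt (fun y' => Real.log (likRatio μ Z y')) (condMeanBayes μ Z y) y :=
  hasGradientAt_log_likRatio_general μ Z hZ
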